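/- The Bernoulli-Catalan polynomial Q_n has degree n with leading coefficient A_n = 2^{1-n}C_{n-1}, coefficient of z^{n-1} equal to -(n/2)A_n, and (for n ≥ 2) coefficient of z^{n-2} equal to (n(n-1)/8)A_n - 2^{n-2}(n-1)/12. -/

import Mathlib

/-!
Only the first two terms of `𝒦` reach the three top coefficients: `𝒦 P = P/2 - P''/24 + …`.
Since `𝒦` has constant coefficients it commutes with `z ↦ z + 1/2`, and `Q_1(z + 1/2) = z`,
so it is natural to expand around `1/2`: the three top coefficients of `Q_n` are those of
`A_n (z - 1/2)^n - D_n (z - 1/2)^(n-2)`, where the pair `(A_n, D_n)` is propagated bilinearly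
by the recursion. This gives `A_n = ½ ∑ A_k A_(n-k)`, the Catalan convolution, and
`D_n = ∑ D_k A_(n-k) + n(n-1)/12 · A_n`, which reduces to
`∑_(i+j=p) i 4^i C_j + (p+1)(p+2) C_(p+1) = 2(p+1) 4^p`.
-/

open Polynomial Finset

/-- The operator `𝒦 = 2 ∑_{r≥1} ((2^{2r}-1)/(2r)!) B_{2r} (d/dz)^{2r-2}` acting on
polynomials (the sum is finite on any polynomial, since high derivatives vanish). -/
noncomputable def KOp (P : Polynomial ℚ) : Polynomial ℚ :=
  2 * ∑ r ∈ Finset.Icc 1 (P.natDegree + 1),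
    Polynomial.C ((((2 : ℚ) ^ (2 * r) - 1) / (Nat.factorial (2 * r))) * _root_.bernoulli (2 * r)) *
      (Polynomial.derivative^[2 * r - 2] P)

namespace BernoulliCatalan

theorem succ_succ_mul_catalan_succ (n : ℕ) :
    (n + 2) * catalan (n + 1) = 2 * (2 * n + 1) * catalan n := by
  have h₁ := succ_mul_catalan_eq_centralBinom n
  have h₂ := succ_mul_catalan_eq_centralBinom (n + 1)
  have h₃ := Nat.succ_mul_centralBinom_succ n
  refine Nat.eq_of_mul_eq_mul_left (by omega : 0 < n + 1) ?_
  linear_combination (n + 1) * h₂ + h₃ - 2 * (2 * n + 1) * h₁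

theorem two_mul_sum_four_pow_mul_catalan (p : ℕ) :
    2 * ∑ ij ∈ antidiagonal p, 4 ^ ij.1 * catalan ij.2 + (p + 2) * catalan (p + 1)
      = 4 ^ (p + 1) := by
  induction p with
  | zero => simp [catalan_one]
  | succ p ih =>
    have hshift : ∑ ij ∈ antidiagonal p, 4 ^ (ij.1 + 1) * catalan ij.2
        = 4 * ∑ ij ∈ antidiagonal p, 4 ^ ij.1 * catalan ij.2 := by
      rw [mul_sum]; exact sum_congr rfl fun _ _ ↦ by ring
    rw [Nat.sum_antidiagonal_succ, hshift]
    linear_combination 4 * ih + succ_succ_mul_catalan_succ (p + 1)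

theorem sum_mul_four_pow_mul_catalan (p : ℕ) :
    ∑ ij ∈ antidiagonal p, ij.1 * 4 ^ ij.1 * catalan ij.2 + (p + 1) * (p + 2) * catalan (p + 1)
      = 2 * (p + 1) * 4 ^ p := by
  induction p with
  | zero => simp [catalan_one]
  | succ p ih =>
    have hshift : ∑ ij ∈ antidiagonal p, (ij.1 + 1) * 4 ^ (ij.1 + 1) * catalan ij.2
        = 4 * ∑ ij ∈ antidiagonal p, ij.1 * 4 ^ ij.1 * catalan ij.2
          + 4 * ∑ ij ∈ antidiagonal p, 4 ^ ij.1 * catalan ij.2 := by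
      rw [mul_sum, mul_sum, ← sum_add_distrib]; exact sum_congr rfl fun _ _ ↦ by ring
    rw [Nat.sum_antidiagonal_succ, hshift]
    linear_combination 4 * ih + 2 * two_mul_sum_four_pow_mul_catalan p
      + (p + 2) * succ_succ_mul_catalan_succ (p + 1)

section TopCoeffs

variable {R : Type*} [Semiring R]

/-- `a, b, c` are the coefficients of `z^n, z^(n-1), z^(n-2)`; reading them off `reflect n p`
makes those below `z^0` equal to `0` when `n < 2`. -/
def TopCoeffs (p : R[X]) (n : ℕ) (a b c : R) : Prop :=
  p.natDegree ≤ n ∧ (reflect n p).coeff 0 = a ∧ (reflect n p).coeff 1 = b ∧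
    (reflect n p).coeff 2 = c

theorem coeff_reflect_of_le (p : R[X]) {n i : ℕ} (hi : i ≤ n) :
    (reflect n p).coeff i = p.coeff (n - i) := by
  rw [coeff_reflect, revAt_le hi]

theorem topCoeffs_add_two_iff {p : R[X]} {m : ℕ} {a b c : R} :
    TopCoeffs p (m + 2) a b c ↔
      p.natDegree ≤ m + 2 ∧ p.coeff (m + 2) = a ∧ p.coeff (m + 1) = b ∧ p.coeff m = c := by
  simp only [TopCoeffs, coeff_reflect, revAt_le (by omega : 0 ≤ m + 2),
    revAt_le (by omega : 1 ≤ m + 2), revAt_le (by omega : 2 ≤ m + 2)]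
  rfl

theorem TopCoeffs.mul {p q : R[X]} {k l : ℕ} {a b c a' b' c' : R}
    (hp : TopCoeffs p k a b c) (hq : TopCoeffs q l a' b' c') :
    TopCoeffs (p * q) (k + l) (a * a') (a * b' + b * a') (a * c' + b * b' + c * a') := by
  obtain ⟨hpdeg, ha, hb, hc⟩ := hp
  obtain ⟨hqdeg, ha', hb', hc'⟩ := hq
  refine ⟨natDegree_mul_le.trans (add_le_add hpdeg hqdeg), ?_⟩
  simp only [reflect_mul p q hpdeg hqdeg, coeff_mul, Nat.sum_antidiagonal_succ,
    Nat.antidiagonal_zero, sum_singleton, Nat.reduceAdd, ha, hb, hc, ha', hb', hc']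
  exact ⟨trivial, trivial, (add_assoc _ _ _).symm⟩

theorem TopCoeffs.sum {ι : Type*} {s : Finset ι} {p : ι → R[X]} {n : ℕ} {a b c : ι → R}
    (h : ∀ i ∈ s, TopCoeffs (p i) n (a i) (b i) (c i)) :
    TopCoeffs (∑ i ∈ s, p i) n (∑ i ∈ s, a i) (∑ i ∈ s, b i) (∑ i ∈ s, c i) := by
  classical
  induction s using Finset.induction_on with
  | empty => simp [TopCoeffs]
  | insert i s hi ih =>
    rw [forall_mem_insert] at h
    obtain ⟨hdeg, ha, hb, hc⟩ := h.1
    obtain ⟨sdeg, sa, sb, sc⟩ := ih h.2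
    simp only [sum_insert hi]
    exact ⟨natDegree_add_le_of_degree_le hdeg sdeg, by simp [ha, sa], by simp [hb, sb],
      by simp [hc, sc]⟩

end TopCoeffs

theorem natDegree_KOp_le (P : ℚ[X]) : (KOp P).natDegree ≤ P.natDegree := by
  refine natDegree_mul_le.trans ?_
  rw [natDegree_ofNat, zero_add]
  refine natDegree_sum_le_of_forall_le _ _ fun r _ ↦ ?_
  exact (natDegree_C_mul_le _ _).trans <|
    (natDegree_iterate_derivative _ _).trans (Nat.sub_le _ _)

theorem coeff_KOp (P : ℚ[X]) {i : ℕ} (hP : P.natDegree ≤ i + 3) :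
    (KOp P).coeff i = P.coeff i / 2 - (i + 1) * (i + 2) / 24 * P.coeff (i + 2) := by
  set f : ℕ → ℚ := fun r ↦
    (((2 : ℚ) ^ (2 * r) - 1) / (2 * r).factorial * _root_.bernoulli (2 * r)) *
      (derivative^[2 * r - 2] P).coeff i
  have hf : ∀ r, P.natDegree < i + (2 * r - 2) → f r = 0 := fun r hr ↦ by
    simp [f, coeff_iterate_derivative, coeff_eq_zero_of_natDegree_lt hr]
  have hKOp : (KOp P).coeff i = 2 * ∑ r ∈ Icc 1 (P.natDegree + 1), f r := by
    simp only [KOp, f, ← C_ofNat, coeff_C_mul, finsetSum_coeff]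
  have hsum : ∑ r ∈ Icc 1 (P.natDegree + 1), f r = ∑ r ∈ Icc 1 2, f r := by
    rw [sum_subset (Icc_subset_Icc_right (by omega : P.natDegree + 1 ≤ P.natDegree + 3)),
      ← sum_subset (Icc_subset_Icc_right (by omega : 2 ≤ P.natDegree + 3))] <;>
    · intro r hr hr'
      simp only [mem_Icc] at hr hr'
      exact hf r (by omega)
  rw [hKOp, hsum, show Icc 1 2 = {1, 2} from rfl, sum_pair (by norm_num)]
  simp only [f, coeff_iterate_derivative]
  norm_num [bernoulli_two, bernoulli_eq_bernoulli'_of_ne_one, bernoulli'_four, Nat.factorial,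
    Nat.descFactorial]
  ring

theorem TopCoeffs.KOp {S : ℚ[X]} {n : ℕ} {a b c : ℚ} (hn : 2 ≤ n) (h : TopCoeffs S n a b c) :
    TopCoeffs (KOp S) n (a / 2) (b / 2) (c / 2 - n * (n - 1) / 24 * a) := by
  obtain ⟨m, rfl⟩ : ∃ m, n = m + 2 := ⟨n - 2, by omega⟩
  obtain ⟨hdeg, ha, hb, hc⟩ := topCoeffs_add_two_iff.1 h
  have hvanish : ∀ j, m + 2 < j → S.coeff j = 0 := fun j hj ↦
    coeff_eq_zero_of_natDegree_lt (by omega)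
  refine topCoeffs_add_two_iff.2 ⟨(natDegree_KOp_le S).trans hdeg, ?_, ?_, ?_⟩
  · rw [coeff_KOp S (by omega), hvanish (m + 2 + 2) (by omega), ha]; ring
  · rw [coeff_KOp S (by omega), hvanish (m + 1 + 2) (by omega), hb]; ring
  · rw [coeff_KOp S (by omega), hc, ha]; push_cast; ring

/-- The top coefficients of `a (z - 1/2)^n - d (z - 1/2)^(n-2)`. -/
def ShiftedTopCoeffs (p : ℚ[X]) (n : ℕ) (a d : ℚ) : Prop :=
  TopCoeffs p n a (-(n / 2) * a) (n * (n - 1) / 8 * a - d)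

theorem ShiftedTopCoeffs.mul {p q : ℚ[X]} {k l : ℕ} {a d a' d' : ℚ}
    (hp : ShiftedTopCoeffs p k a d) (hq : ShiftedTopCoeffs q l a' d') :
    ShiftedTopCoeffs (p * q) (k + l) (a * a') (a * d' + d * a') := by
  unfold ShiftedTopCoeffs at *
  convert TopCoeffs.mul hp hq using 1 <;> push_cast <;> ring

theorem ShiftedTopCoeffs.sum {ι : Type*} {s : Finset ι} {p : ι → ℚ[X]} {n : ℕ}
    {a d : ι → ℚ} (h : ∀ i ∈ s, ShiftedTopCoeffs (p i) n (a i) (d i)) :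
    ShiftedTopCoeffs (∑ i ∈ s, p i) n (∑ i ∈ s, a i) (∑ i ∈ s, d i) := by
  unfold ShiftedTopCoeffs at *
  convert TopCoeffs.sum h using 1
  · rw [mul_sum]
  · rw [sum_sub_distrib, mul_sum]

theorem ShiftedTopCoeffs.KOp {S : ℚ[X]} {n : ℕ} {a d : ℚ} (hn : 2 ≤ n)
    (h : ShiftedTopCoeffs S n a d) :
    ShiftedTopCoeffs (KOp S) n (a / 2) (d / 2 + n * (n - 1) / 24 * a) := by
  unfold ShiftedTopCoeffs at *
  convert TopCoeffs.KOp hn h using 1 <;> ring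

noncomputable def A (n : ℕ) : ℚ := 2 ^ ((1 : ℤ) - n) * catalan (n - 1)

noncomputable def D (n : ℕ) : ℚ := 2 ^ (n - 2) * ((n : ℚ) - 1) / 12

theorem A_succ (j : ℕ) : A (j + 1) = catalan j / 2 ^ j := by
  rw [A, Nat.add_sub_cancel, Nat.cast_succ, show (1 : ℤ) - (j + 1) = -j by ring, zpow_neg,
    zpow_natCast, inv_mul_eq_div]

theorem D_succ (i : ℕ) : D (i + 1) = i * 2 ^ i / 24 := by
  rcases i with _ | i
  · simp [D]
  · rw [D, show i + 1 + 1 - 2 = i by omega]; push_cast; ring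

theorem A_ne_zero (n : ℕ) : A n ≠ 0 := by
  have : catalan (n - 1) ≠ 0 := fun h ↦ (Nat.centralBinom_pos (n - 1)).ne' <| by
    rw [← succ_mul_catalan_eq_centralBinom, h, mul_zero]
  exact mul_ne_zero (zpow_ne_zero _ two_ne_zero) (Nat.cast_ne_zero.2 this)

theorem sum_Ico_eq_sum_antidiagonal {M : Type*} [AddCommMonoid M] (f : ℕ → ℕ → M) (m : ℕ) :
    ∑ k ∈ Ico 1 (m + 2), f k (m + 2 - k) = ∑ ij ∈ antidiagonal m, f (ij.1 + 1) (ij.2 + 1) := by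
  rw [sum_Ico_eq_sum_range,
    Nat.sum_antidiagonal_eq_sum_range_succ (fun i j ↦ f (i + 1) (j + 1))]
  exact sum_congr rfl fun k hk ↦ by
    rw [mem_range] at hk
    rw [add_comm 1 k, show m + 2 - (k + 1) = m - k + 1 by omega]

theorem sum_A_mul_A (m : ℕ) :
    ∑ ij ∈ antidiagonal m, A (ij.1 + 1) * A (ij.2 + 1) = 2 * A (m + 2) := by
  have hterm : ∀ ij ∈ antidiagonal m,
      A (ij.1 + 1) * A (ij.2 + 1) = (catalan ij.1 * catalan ij.2 : ℕ) / 2 ^ m := by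
    rintro ⟨i, j⟩ hij
    rw [HasAntidiagonal.mem_antidiagonal] at hij
    subst hij
    rw [A_succ, A_succ, pow_add]; push_cast; ring
  rw [sum_congr rfl hterm, ← sum_div, ← Nat.cast_sum, ← catalan_succ', A_succ, pow_succ]
  field_simp

theorem sum_D_mul_A (m : ℕ) :
    ∑ ij ∈ antidiagonal m, D (ij.1 + 1) * A (ij.2 + 1)
      = D (m + 2) - (m + 2) * (m + 1) / 12 * A (m + 2) := by
  have hterm : ∀ ij ∈ antidiagonal m, D (ij.1 + 1) * A (ij.2 + 1)
      = (ij.1 * 4 ^ ij.1 * catalan ij.2 : ℕ) / (24 * 2 ^ m) := by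
    rintro ⟨i, j⟩ hij
    rw [HasAntidiagonal.mem_antidiagonal] at hij
    subst hij
    rw [D_succ, A_succ, pow_add]
    push_cast
    rw [show (4 : ℚ) ^ i = 2 ^ i * 2 ^ i by rw [← mul_pow]; norm_num]
    field_simp
  have key := congrArg (Nat.cast (R := ℚ)) (sum_mul_four_pow_mul_catalan m)
  push_cast at key
  rw [sum_congr rfl hterm, ← sum_div, D, A_succ, show m + 2 - 2 = m by omega]
  push_cast
  rw [eq_sub_of_add_eq key, show (4 : ℚ) ^ m = 2 ^ m * 2 ^ m by rw [← mul_pow]; norm_num]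
  field_simp
  ring

theorem shiftedTopCoeffs_of_recursion (Q : ℕ → ℚ[X]) (h1 : Q 1 = X - C (1 / 2))
    (hrec : ∀ n : ℕ, 2 ≤ n → Q n = KOp (∑ k ∈ Ico 1 n, Q k * Q (n - k))) :
    ∀ n, 1 ≤ n → ShiftedTopCoeffs (Q n) n (A n) (D n) := by
  intro n hn
  induction n using Nat.strong_induction_on with
  | _ n ih =>
  obtain rfl | ⟨m, rfl⟩ : n = 1 ∨ ∃ m, n = m + 2 := by
    rcases Nat.lt_or_ge n 2 with h | h
    · exact .inl (by omega)
    · exact .inr ⟨n - 2, by omega⟩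
  · rw [h1]
    simp [ShiftedTopCoeffs, TopCoeffs, coeff_one, A, D]
  · have hS : ShiftedTopCoeffs (∑ k ∈ Ico 1 (m + 2), Q k * Q (m + 2 - k)) (m + 2)
        (∑ ij ∈ antidiagonal m, A (ij.1 + 1) * A (ij.2 + 1))
        (∑ ij ∈ antidiagonal m,
          (A (ij.1 + 1) * D (ij.2 + 1) + D (ij.1 + 1) * A (ij.2 + 1))) := by
      rw [sum_Ico_eq_sum_antidiagonal (fun k l ↦ Q k * Q l)]
      refine ShiftedTopCoeffs.sum fun ⟨i, j⟩ hij ↦ ?_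
      have hij : i + j = m := HasAntidiagonal.mem_antidiagonal.1 hij
      rw [show m + 2 = i + 1 + (j + 1) by omega]
      exact (ih _ (by omega) (by omega)).mul (ih _ (by omega) (by omega))
    have hsym : ∑ ij ∈ antidiagonal m,
          (A (ij.1 + 1) * D (ij.2 + 1) + D (ij.1 + 1) * A (ij.2 + 1))
        = 2 * ∑ ij ∈ antidiagonal m, D (ij.1 + 1) * A (ij.2 + 1) := by
      rw [sum_add_distrib, ← Nat.sum_antidiagonal_swap]
      simp only [Prod.fst_swap, Prod.snd_swap, mul_comm (A _)]
      ring
    rw [hrec _ (by omega)]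
    convert hS.KOp (by omega) using 1
    · rw [sum_A_mul_A]; ring
    · rw [hsym, sum_D_mul_A, sum_A_mul_A]; push_cast; ring

end BernoulliCatalan

theorem bernoulliCatalan_leading_coeffs_general (Q : ℕ → Polynomial ℚ)
    (h1 : Q 1 = X - C (1 / 2))
    (hrec : ∀ n : ℕ, 2 ≤ n → Q n = KOp (∑ k ∈ Finset.Ico 1 n, Q k * Q (n - k))) :
    ∀ n : ℕ, 1 ≤ n →
      (Q n).degree = n ∧
      (Q n).coeff n = (2 : ℚ) ^ ((1 : ℤ) - n) * catalan (n - 1) ∧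
      (Q n).coeff (n - 1) = -((n : ℚ) / 2) * ((2 : ℚ) ^ ((1 : ℤ) - n) * catalan (n - 1)) ∧
      (2 ≤ n →
        (Q n).coeff (n - 2)
          = ((n : ℚ) * ((n : ℚ) - 1) / 8) * ((2 : ℚ) ^ ((1 : ℤ) - n) * catalan (n - 1))
            - (2 : ℚ) ^ (n - 2) * ((n : ℚ) - 1) / 12) := by
  intro n hn
  obtain ⟨hdeg, ha, hb, hc⟩ := BernoulliCatalan.shiftedTopCoeffs_of_recursion Q h1 hrec n hn
  rw [BernoulliCatalan.coeff_reflect_of_le _ n.zero_le, Nat.sub_zero] at ha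
  rw [BernoulliCatalan.coeff_reflect_of_le _ hn] at hb
  have hA := BernoulliCatalan.A_ne_zero n
  exact ⟨degree_eq_of_le_of_coeff_ne_zero (natDegree_le_iff_degree_le.1 hdeg) (ha ▸ hA), ha, hb,
    fun h2 ↦ by rwa [BernoulliCatalan.coeff_reflect_of_le _ h2] at hc⟩

/-- The Bernoulli-Catalan polynomial `Q_n` has degree `n`, leading coefficient
`A_n = 2^{1-n} C_{n-1}`, coefficient of `z^{n-1}` equal to `-(n/2) A_n`, and for `n ≥ 2`
coefficient of `z^{n-2}` equal to `(n(n-1)/8) A_n - 2^{n-2}(n-1)/12`. -/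
theorem bernoulliCatalan_leading_coeffs (Q : ℕ → Polynomial ℚ)
    (h0 : Q 0 = 0) (h1 : Q 1 = X - C (1 / 2))
    (hrec : ∀ n : ℕ, 2 ≤ n → Q n = KOp (∑ k ∈ Finset.Ico 1 n, Q k * Q (n - k))) :
    ∀ n : ℕ, 1 ≤ n →
      (Q n).degree = n ∧
      (Q n).coeff n = (2 : ℚ) ^ ((1 : ℤ) - n) * catalan (n - 1) ∧
      (Q n).coeff (n - 1) = -((n : ℚ) / 2) * ((2 : ℚ) ^ ((1 : ℤ) - n) * catalan (n - 1)) ∧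
      (2 ≤ n →
        (Q n).coeff (n - 2)
          = ((n : ℚ) * ((n : ℚ) - 1) / 8) * ((2 : ℚ) ^ ((1 : ℤ) - n) * catalan (n - 1))
            - (2 : ℚ) ^ (n - 2) * ((n : ℚ) - 1) / 12) :=
  bernoulliCatalan_leading_coeffs_general Q h1 hrec
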